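/- arXiv:1906.00028 — 4 statements merged into one kernel-verified Lean document; each statement's English description precedes it below -/
import Mathlib

section
/- Let X have density f, positive-definite covariance Σ = Cov X, and let A be invertible, b ∈ ℝ^d, m ∈ ℝ^d. Then A · X_{[m]} + b has the same distribution as (A X + b)_{[A m + b]}, where the Gaussian weight for A X + b uses covariance A Σ Aᵀ. -/
open MeasureTheory Matrix

/-- The multivariate normal density `N(m, Σ)` on `ℝ^d`. -/
noncomputable def mvNormalPdf {d : ℕ} (m : Fin d → ℝ) (S : Matrix (Fin d) (Fin d) ℝ)
    (x : Fin d → ℝ) : ℝ :=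
  (2 * Real.pi) ^ (-(d : ℝ) / 2) * S.det ^ (-(1 : ℝ) / 2) *
    Real.exp (-(1 / 2) * ((x - m) ⬝ᵥ (S⁻¹ *ᵥ (x - m))))

/-- Mean of a random vector with density `f` (w.r.t. Lebesgue measure on `ℝ^d`). -/
noncomputable def densMean {d : ℕ} (f : (Fin d → ℝ) → ℝ) (i : Fin d) : ℝ :=
  ∫ x : Fin d → ℝ, x i * f x

/-- Covariance matrix of a random vector with density `f`. -/
noncomputable def densCov {d : ℕ} (f : (Fin d → ℝ) → ℝ) : Matrix (Fin d) (Fin d) ℝ :=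
  fun i j => ∫ x : Fin d → ℝ, (x i - densMean f i) * (x j - densMean f j) * f x

/-!
The affine map `T x = A x + b` pushes Lebesgue measure forward to `|det A|⁻¹ • volume`, and
`N(A m + b, A Σ Aᵀ) (T x) = N(m, Σ) x / |det A|`. Hence the unnormalised weighted density of
`A X + b` at `T x` is `|det A|⁻²` times that of `X` at `x`, its normalising constant is
`|det A|⁻¹` times that of `X`, and their quotient is the push-forward density
`|det A|⁻¹ (w / c) (T⁻¹ y)` of the weighted law of `X`.
-/

theorem MeasurableEquiv.map_withDensity {α β : Type*} [MeasurableSpace α] [MeasurableSpace β]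
    (e : α ≃ᵐ β) (μ : Measure α) (g : α → ENNReal) :
    Measure.map e (μ.withDensity g) = (Measure.map e μ).withDensity (g ∘ e.symm) := by
  ext s hs
  rw [e.map_apply, withDensity_apply _ (e.measurable hs), withDensity_apply _ hs,
    e.restrict_map, lintegral_map_equiv]
  simp

namespace Matrix

variable {ι : Type*} [Fintype ι] [DecidableEq ι] (A : Matrix ι ι ℝ) (hA : IsUnit A.det)
  (b : ι → ℝ)

noncomputable def affineMeasurableEquiv : (ι → ℝ) ≃ᵐ (ι → ℝ) where
  toFun x := A *ᵥ x + b
  invFun y := A⁻¹ *ᵥ (y - b)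
  left_inv x := by simp [mulVec_mulVec, nonsing_inv_mul A hA]
  right_inv y := by simp [mulVec_mulVec, mul_nonsing_inv A hA]
  measurable_toFun := (continuous_const.matrix_mulVec continuous_id).measurable.add_const b
  measurable_invFun :=
    (continuous_const.matrix_mulVec (continuous_id.sub continuous_const)).measurable

@[simp]
theorem affineMeasurableEquiv_apply (x : ι → ℝ) :
    affineMeasurableEquiv A hA b x = A *ᵥ x + b := rfl

@[simp]
theorem affineMeasurableEquiv_symm_apply (y : ι → ℝ) :
    (affineMeasurableEquiv A hA b).symm y = A⁻¹ *ᵥ (y - b) := rfl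

theorem map_affineMeasurableEquiv_volume :
    Measure.map (affineMeasurableEquiv A hA b) volume = ENNReal.ofReal |A.det|⁻¹ • volume := by
  have hcomp : ⇑(affineMeasurableEquiv A hA b) = (· + b) ∘ toLin' A := by
    ext x; simp
  rw [hcomp, ← Measure.map_map (measurable_add_const b)
      (toLin' A).continuous_of_finiteDimensional.measurable,
    Real.map_matrix_volume_pi_eq_smul_volume_pi hA.ne_zero, Measure.map_smul,
    map_add_right_eq_self, abs_inv]

theorem integral_comp_affineMeasurableEquiv_symm (g : (ι → ℝ) → ℝ) :
    ∫ y, g ((affineMeasurableEquiv A hA b).symm y) = |A.det| * ∫ x, g x := by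
  have hcov := integral_map_equiv (μ := volume) (affineMeasurableEquiv A hA b)
    (g ∘ (affineMeasurableEquiv A hA b).symm)
  rw [map_affineMeasurableEquiv_volume, integral_smul_measure] at hcov
  simp only [Function.comp_apply, MeasurableEquiv.symm_apply_apply, smul_eq_mul] at hcov
  rw [← hcov, ENNReal.toReal_ofReal (by positivity), ← mul_assoc,
    mul_inv_cancel₀ (abs_ne_zero.mpr hA.ne_zero), one_mul]

end Matrix

theorem mvNormalPdf_mulVec_add {d : ℕ} (m b x : Fin d → ℝ) {S A : Matrix (Fin d) (Fin d) ℝ}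
    (hS : 0 < S.det) (hA : IsUnit A.det) :
    mvNormalPdf (A *ᵥ m + b) (A * S * Aᵀ) (A *ᵥ x + b) = mvNormalPdf m S x / |A.det| := by
  have hdet : (A * S * Aᵀ).det = |A.det| ^ 2 * S.det := by
    rw [det_mul, det_mul, det_transpose, sq_abs]; ring
  have hquad : (A *ᵥ x + b - (A *ᵥ m + b)) ⬝ᵥ ((A * S * Aᵀ)⁻¹ *ᵥ (A *ᵥ x + b - (A *ᵥ m + b)))
      = (x - m) ⬝ᵥ (S⁻¹ *ᵥ (x - m)) := by
    rw [add_sub_add_right_eq_sub, ← mulVec_sub, Matrix.mul_inv_rev, Matrix.mul_inv_rev,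
      mulVec_mulVec, Matrix.mul_assoc, Matrix.mul_assoc, nonsing_inv_mul A hA, Matrix.mul_one,
      ← mulVec_mulVec, dotProduct_mulVec, ← transpose_nonsing_inv, vecMul_transpose,
      mulVec_mulVec, nonsing_inv_mul A hA, one_mulVec]
  have hrpow : (|A.det| ^ 2 * S.det) ^ (-(1:ℝ)/2) = |A.det|⁻¹ * S.det ^ (-(1:ℝ)/2) := by
    rw [Real.mul_rpow (by positivity) hS.le, ← Real.rpow_natCast, ← Real.rpow_mul (abs_nonneg _)]
    norm_num [Real.rpow_neg_one]
  unfold mvNormalPdf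
  rw [hquad, hdet, hrpow]
  ring

theorem affine_equivariance_of_gaussian_weighting_general {d : ℕ}
    (f : (Fin d → ℝ) → ℝ) (A : Matrix (Fin d) (Fin d) ℝ) (b m : Fin d → ℝ)
    (hpd : (densCov f).PosDef) (hA : IsUnit A.det) :
    Measure.map (fun x => A *ᵥ x + b)
        (volume.withDensity fun x =>
          ENNReal.ofReal
            (mvNormalPdf m (densCov f) x * f x /
              ∫ z, mvNormalPdf m (densCov f) z * f z)) =
      volume.withDensity fun y =>
        ENNReal.ofReal
          (mvNormalPdf (A *ᵥ m + b) (A * densCov f * Aᵀ) y *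
              (f (A⁻¹ *ᵥ (y - b)) / |A.det|) /
            ∫ z, mvNormalPdf (A *ᵥ m + b) (A * densCov f * Aᵀ) z *
              (f (A⁻¹ *ᵥ (z - b)) / |A.det|)) := by
  set e := affineMeasurableEquiv A hA b
  set w : (Fin d → ℝ) → ℝ := fun x => mvNormalPdf m (densCov f) x * f x
  have hweight : ∀ y, mvNormalPdf (A *ᵥ m + b) (A * densCov f * Aᵀ) y *
      (f (A⁻¹ *ᵥ (y - b)) / |A.det|) = w (e.symm y) / |A.det| ^ 2 := fun y => by
    rw [← affineMeasurableEquiv_symm_apply A hA b]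
    obtain ⟨x, rfl⟩ := e.surjective y
    rw [e.symm_apply_apply, affineMeasurableEquiv_apply,
      mvNormalPdf_mulVec_add _ _ _ hpd.det_pos hA]
    ring
  have hnorm : ∫ z, w (e.symm z) / |A.det| ^ 2 = (∫ x, w x) / |A.det| := by
    rw [integral_comp_affineMeasurableEquiv_symm A hA b (fun x => w x / |A.det| ^ 2),
      integral_div]
    field_simp
  simp_rw [hweight, hnorm]
  change Measure.map e _ = _
  rw [e.map_withDensity, map_affineMeasurableEquiv_volume, withDensity_smul_measure,
    ← withDensity_smul' _ _ ENNReal.ofReal_ne_top]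
  congr 1
  funext y
  rw [Pi.smul_apply, smul_eq_mul, Function.comp_apply, ← ENNReal.ofReal_mul (by positivity)]
  congr 1
  field_simp
  rfl

theorem affine_equivariance_of_gaussian_weighting {d : ℕ}
    (f : (Fin d → ℝ) → ℝ) (A : Matrix (Fin d) (Fin d) ℝ) (b m : Fin d → ℝ)
    (hf0 : ∀ x, 0 ≤ f x) (hfm : Measurable f) (hf1 : ∫ x, f x = 1)
    (hint1 : ∀ i, Integrable fun x : Fin d → ℝ => x i * f x)
    (hint2 : ∀ i j, Integrable fun x : Fin d → ℝ => x i * x j * f x)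
    (hpd : (densCov f).PosDef) (hA : IsUnit A.det) :
    Measure.map (fun x => A *ᵥ x + b)
        (volume.withDensity fun x =>
          ENNReal.ofReal
            (mvNormalPdf m (densCov f) x * f x /
              ∫ z, mvNormalPdf m (densCov f) z * f z)) =
      volume.withDensity fun y =>
        ENNReal.ofReal
          (mvNormalPdf (A *ᵥ m + b) (A * densCov f * Aᵀ) y *
              (f (A⁻¹ *ᵥ (y - b)) / |A.det|) /
            ∫ z, mvNormalPdf (A *ᵥ m + b) (A * densCov f * Aᵀ) z *
              (f (A⁻¹ *ᵥ (z - b)) / |A.det|)) :=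
  affine_equivariance_of_gaussian_weighting_general f A b m hpd hA
end

section
/- Let Σ₁, Σ₂ be symmetric positive-definite d×d matrices such that Σ₁⁻¹ Σ₂ has d distinct eigenvalues. If W₁ and W₂ are invertible matrices each simultaneously diagonalizing Σ₁ and Σ₂, then W₂ = W₁ P D for some permutation matrix P and invertible diagonal matrix D (i.e., W is unique up to rescaling and permutation of columns). -/
/-!
Write `Wᵀ S₁ W = diag a` and `Wᵀ S₂ W = diag b`. Cancelling `Wᵀ` gives `S₂ W = S₁ W diag(b / a)`, so
`W⁻¹ (S₁⁻¹ S₂) W = diag μ` with `μ = b / a`, and `μ` is injective because the eigenvalues are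
distinct. For two such diagonalizers, `K = W₁⁻¹ W₂` intertwines the diagonal forms,
`diag μ₁ K = K diag μ₂`, so `K i j ≠ 0` forces `μ₁ i = μ₂ j`. Hence each column of the invertible
matrix `K` has exactly one nonzero entry, i.e. `K` is a permutation matrix times an invertible
diagonal matrix.
-/

open Matrix Polynomial

namespace Polynomial

theorem injective_of_prod_X_sub_C_eq {ι R : Type*} [Fintype ι] [CommRing R] [IsDomain R]
    {f g : ι → R} (hg : Function.Injective g)
    (h : ∏ i, (X - C (f i)) = ∏ i, (X - C (g i))) : Function.Injective f := by
  have roots_eq (v : ι → R) : (∏ i, (X - C (v i))).roots = Finset.univ.val.map v := by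
    rw [← roots_multiset_prod_X_sub_C (Finset.univ.val.map v), Multiset.map_map]
    rfl
  have hnodup : (Finset.univ.val.map f).Nodup := by
    rw [← roots_eq, h, roots_eq]
    exact Finset.univ.nodup.map hg
  exact fun i j hij => Multiset.inj_on_of_nodup_map hnodup i (Finset.mem_univ i) j
    (Finset.mem_univ j) hij

end Polynomial

namespace Matrix

variable {n R : Type*} [Fintype n] [DecidableEq n]

theorem inv_mul_mul_eq_mul_diagonal_div [Field R] {S₁ S₂ W : Matrix n n R} {a b : n → R}
    (hS₁ : IsUnit S₁.det) (hW : IsUnit W.det)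
    (ha : Wᵀ * S₁ * W = diagonal a) (hb : Wᵀ * S₂ * W = diagonal b) :
    S₁⁻¹ * S₂ * W = W * diagonal (b / a) := by
  have ha₀ : ∀ i, a i ≠ 0 := by
    have : IsUnit (diagonal a).det := by
      rw [← ha, det_mul, det_mul, det_transpose]
      exact (hW.mul hS₁).mul hW
    simpa [det_diagonal, Finset.prod_ne_zero_iff] using this.ne_zero
  have hWT : IsUnit Wᵀ := (isUnit_iff_isUnit_det _).mpr (by rwa [det_transpose])
  have hS₂W : S₂ * W = S₁ * W * diagonal (b / a) := hWT.mul_left_cancel <| by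
    have hab : diagonal a * diagonal (b / a) = diagonal b := by
      rw [diagonal_mul_diagonal]
      congr 1
      exact funext fun i => mul_div_cancel₀ (b i) (ha₀ i)
    rw [← mul_assoc, hb, ← mul_assoc, ← mul_assoc, ha, hab]
  rw [mul_assoc, hS₂W, mul_assoc, nonsing_inv_mul_cancel_left _ _ hS₁]

theorem charpoly_eq_prod_of_mul_eq_mul_diagonal [CommRing R] {M W : Matrix n n R} {μ : n → R}
    (hW : IsUnit W.det) (hMW : M * W = W * diagonal μ) :
    M.charpoly = ∏ i, (X - C (μ i)) := by
  obtain ⟨U, rfl⟩ := (isUnit_iff_isUnit_det W).mpr hW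
  rw [← charpoly_diagonal, ← charpoly_units_conj' U M, mul_assoc, hMW,
    ← mul_assoc, nonsing_inv_mul _ hW, one_mul]

theorem diagonal_mul_inv_mul_eq_inv_mul_mul_diagonal [CommRing R] {M W₁ W₂ : Matrix n n R}
    {μ ν : n → R} (hW₁ : IsUnit W₁.det) (h₁ : M * W₁ = W₁ * diagonal μ)
    (h₂ : M * W₂ = W₂ * diagonal ν) :
    diagonal μ * (W₁⁻¹ * W₂) = W₁⁻¹ * W₂ * diagonal ν := by
  calc diagonal μ * (W₁⁻¹ * W₂) = W₁⁻¹ * (W₁ * diagonal μ) * W₁⁻¹ * W₂ := by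
        rw [nonsing_inv_mul_cancel_left _ _ hW₁, mul_assoc]
    _ = W₁⁻¹ * (M * W₂) := by
        simp only [← h₁, Matrix.mul_assoc, mul_nonsing_inv_cancel_left _ _ hW₁]
    _ = W₁⁻¹ * W₂ * diagonal ν := by rw [h₂, mul_assoc]

theorem exists_perm_diagonal_of_column_ne_zero_unique [CommRing R] [Nontrivial R]
    {K : Matrix n n R} (hK : IsUnit K.det)
    (huniq : ∀ i i' j, K i j ≠ 0 → K i' j ≠ 0 → i = i') :
    ∃ (σ : Equiv.Perm n) (D : Matrix n n R),
      D.IsDiag ∧ IsUnit D.det ∧ K = σ.permMatrix R * D := by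
  have hcol : ∀ j, ∃ i, K i j ≠ 0 := fun j => by
    by_contra! h
    exact hK.ne_zero (det_eq_zero_of_column_eq_zero j h)
  choose p hp using hcol
  have hsurj : Function.Surjective p := fun i => by
    by_contra! h
    refine hK.ne_zero (det_eq_zero_of_row_eq_zero i fun j => ?_)
    by_contra hij
    exact h j (huniq _ _ j (hp j) hij)
  let e : Equiv.Perm n := Equiv.ofBijective p ⟨Finite.injective_iff_surjective.mpr hsurj, hsurj⟩
  refine ⟨e.symm, K.submatrix e id, fun i j hij => ?_, ?_, ?_⟩
  · by_contra h
    exact hij (e.injective (huniq _ _ j h (hp j)))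
  · rw [det_permute]
    exact ((Equiv.Perm.sign e).isUnit.map (Int.castRingHom R)).mul hK
  · rw [PEquiv.toMatrix_toPEquiv_mul, submatrix_submatrix]
    simp

theorem exists_perm_diagonal_of_diagonal_mul_eq_mul_diagonal [CommRing R] [IsDomain R]
    {K : Matrix n n R} {μ ν : n → R} (hK : IsUnit K.det) (hμ : Function.Injective μ)
    (hKμν : diagonal μ * K = K * diagonal ν) :
    ∃ (σ : Equiv.Perm n) (D : Matrix n n R),
      D.IsDiag ∧ IsUnit D.det ∧ K = σ.permMatrix R * D := by
  have hent : ∀ i j, K i j ≠ 0 → μ i = ν j := fun i j hij => by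
    have := congr_fun₂ hKμν i j
    rw [diagonal_mul, mul_diagonal, mul_comm] at this
    exact mul_left_cancel₀ hij this
  exact exists_perm_diagonal_of_column_ne_zero_unique hK fun i i' j hi hi' =>
    hμ ((hent i j hi).trans (hent i' j hi').symm)

end Matrix

theorem simultaneous_diagonalizer_unique_general {d : ℕ}
    (S₁ S₂ W₁ W₂ : Matrix (Fin d) (Fin d) ℝ) (h1 : S₁.PosDef)
    (hdist : ∃ ev : Fin d → ℝ, Function.Injective ev ∧
      (S₁⁻¹ * S₂).charpoly = ∏ i, (X - C (ev i)))
    (hW₁ : IsUnit W₁.det) (hW₂ : IsUnit W₂.det)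
    (hd11 : (W₁ᵀ * S₁ * W₁).IsDiag) (hd12 : (W₁ᵀ * S₂ * W₁).IsDiag)
    (hd21 : (W₂ᵀ * S₁ * W₂).IsDiag) (hd22 : (W₂ᵀ * S₂ * W₂).IsDiag) :
    ∃ (σ : Equiv.Perm (Fin d)) (D : Matrix (Fin d) (Fin d) ℝ),
      D.IsDiag ∧ IsUnit D.det ∧ W₂ = W₁ * σ.permMatrix ℝ * D := by
  obtain ⟨ev, hev_inj, hev⟩ := hdist
  have hS₁ : IsUnit S₁.det := (isUnit_iff_isUnit_det S₁).mp h1.isUnit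
  have hM₁ := inv_mul_mul_eq_mul_diagonal_div hS₁ hW₁ hd11.diagonal_diag.symm
    hd12.diagonal_diag.symm
  have hM₂ := inv_mul_mul_eq_mul_diagonal_div hS₁ hW₂ hd21.diagonal_diag.symm
    hd22.diagonal_diag.symm
  have hμ₁ := injective_of_prod_X_sub_C_eq hev_inj <|
    (charpoly_eq_prod_of_mul_eq_mul_diagonal hW₁ hM₁).symm.trans hev
  have hK : IsUnit (W₁⁻¹ * W₂).det := by
    rw [det_mul]
    exact (isUnit_nonsing_inv_det _ hW₁).mul hW₂
  obtain ⟨σ, D, hD, hD_det, hKσD⟩ := exists_perm_diagonal_of_diagonal_mul_eq_mul_diagonal hK hμ₁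
    (diagonal_mul_inv_mul_eq_inv_mul_mul_diagonal hW₁ hM₁ hM₂)
  exact ⟨σ, D, hD, hD_det, by rw [mul_assoc, ← hKσD, mul_nonsing_inv_cancel_left _ _ hW₁]⟩

theorem simultaneous_diagonalizer_unique {d : ℕ}
    (S₁ S₂ W₁ W₂ : Matrix (Fin d) (Fin d) ℝ) (h1 : S₁.PosDef) (h2 : S₂.PosDef)
    (hdist : ∃ ev : Fin d → ℝ, Function.Injective ev ∧
      (S₁⁻¹ * S₂).charpoly = ∏ i, (X - C (ev i)))
    (hW₁ : IsUnit W₁.det) (hW₂ : IsUnit W₂.det)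
    (hd11 : (W₁ᵀ * S₁ * W₁).IsDiag) (hd12 : (W₁ᵀ * S₂ * W₁).IsDiag)
    (hd21 : (W₂ᵀ * S₁ * W₂).IsDiag) (hd22 : (W₂ᵀ * S₂ * W₂).IsDiag) :
    ∃ (σ : Equiv.Perm (Fin d)) (D : Matrix (Fin d) (Fin d) ℝ),
      D.IsDiag ∧ IsUnit D.det ∧ W₂ = W₁ * σ.permMatrix ℝ * D :=
  simultaneous_diagonalizer_unique_general S₁ S₂ W₁ W₂ h1 hdist hW₁ hW₂ hd11 hd12 hd21 hd22
end

section
/- If A is symmetric positive-definite and W is an invertible matrix such that Wᵀ A W is diagonal, then DE(Wᵀ A W) = 0, and conversely if DE(Wᵀ A W) = 0 then Wᵀ A W is diagonal. -/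
open Matrix

/-- The diagonalization error of a matrix `A`. -/
noncomputable def DE {d : ℕ} (A : Matrix (Fin d) (Fin d) ℝ) : ℝ :=
  Real.log ((Matrix.diagonal fun i => A i i).det / A.det)

/-
Write `B = Wᵀ A W`, which is positive definite. Its LDL factorization `B = L D Lᵀ`, with `L` lower
triangular and `D > 0`, gives `det B = ∏ D_i L_ii²`, while each diagonal entry
`B_ii = ∑_k D_k L_ik²` dominates its own summand `D_i L_ii²`. So `det B ≤ ∏ B_ii` (Hadamard), and
equality forces `L_ik = 0` for `k ≠ i`, i.e. `L` and hence `B` are diagonal. Finally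
`DE B = log (∏ B_ii / det B)` vanishes exactly when this equality holds.
-/

open Finset

section
variable {R : Type*} {n : Type*} [Fintype n] [DecidableEq n]

theorem Matrix.mul_diagonal_mul_transpose_apply [CommSemiring R] (L : Matrix n n R) (D : n → R)
    (i j : n) : (L * diagonal D * Lᵀ) i j = ∑ k, D k * (L i k * L j k) := by
  rw [mul_apply]
  simp only [mul_diagonal, transpose_apply]
  exact sum_congr rfl fun k _ => by ring

theorem Matrix.det_mul_diagonal_mul_transpose [CommRing R] (L : Matrix n n R) (D : n → R) :
    (L * diagonal D * Lᵀ).det = (∏ i, D i) * L.det ^ 2 := by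
  rw [det_mul, det_mul, det_transpose, det_diagonal]
  ring

theorem Matrix.IsDiag.det_eq_prod_diag [CommRing R] {S : Matrix n n R} (hS : S.IsDiag) :
    S.det = ∏ i, S i i := by
  rw [← det_diagonal]
  exact congrArg det hS.diagonal_diag.symm

theorem Matrix.isDiag_mul_diagonal_mul_transpose_of_det_eq_prod_diag [CommRing R] [LinearOrder R]
    [IsStrictOrderedRing R] {L : Matrix n n R} {D : n → R}
    (hL : L.det = ∏ i, L i i) (hD : ∀ i, 0 < D i) (hdet : (L * diagonal D * Lᵀ).det ≠ 0)
    (heq : (L * diagonal D * Lᵀ).det = ∏ i, (L * diagonal D * Lᵀ) i i) :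
    (L * diagonal D * Lᵀ).IsDiag := by
  set S := L * diagonal D * Lᵀ
  have hSii : ∀ i, S i i = ∑ k, D k * L i k ^ 2 := fun i => by
    simp only [S, mul_diagonal_mul_transpose_apply, sq]
  have hdetS : S.det = ∏ i, D i * L i i ^ 2 := by
    rw [det_mul_diagonal_mul_transpose, hL, ← prod_pow, ← prod_mul_distrib]
  have hle : ∀ i, D i * L i i ^ 2 ≤ S i i := fun i => by
    rw [hSii]
    exact single_le_sum (f := fun k => D k * L i k ^ 2) (fun k _ => by have := hD k; positivity)
      (mem_univ i)
  have hpos : ∀ i, 0 < D i * L i i ^ 2 := fun i => by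
    have hne : D i * L i i ^ 2 ≠ 0 := prod_ne_zero_iff.1 (hdetS ▸ hdet) i (mem_univ i)
    have := hD i
    positivity
  have hdiag : ∀ i, S i i = D i * L i i ^ 2 := by
    by_contra! ⟨i, hi⟩
    have := prod_lt_prod (fun j _ => hpos j) (fun j _ => hle j)
      ⟨i, mem_univ i, lt_of_le_of_ne (hle i) hi.symm⟩
    exact this.ne (hdetS ▸ heq)
  have hLdiag : L.IsDiag := fun i j hij => by
    have hsum : ∑ k ∈ univ.erase i, D k * L i k ^ 2 = 0 := by
      have := add_sum_erase univ (fun k => D k * L i k ^ 2) (mem_univ i)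
      rw [← hSii, hdiag] at this
      linarith
    have := (sum_eq_zero_iff_of_nonneg fun k _ => by have := hD k; positivity).1 hsum j
      (mem_erase.2 ⟨hij.symm, mem_univ j⟩)
    simpa [(hD j).ne'] using this
  show (L * diagonal D * Lᵀ).IsDiag
  rw [← hLdiag.diagonal_diag, diagonal_transpose, diagonal_mul_diagonal, diagonal_mul_diagonal]
  exact isDiag_diagonal _

end

section
variable {n : Type*} [Fintype n] [LinearOrder n] [WellFoundedLT n] [LocallyFiniteOrderBot n]
  {S : Matrix n n ℝ}

theorem Matrix.PosDef.exists_eq_lower_mul_diagonal_mul_transpose (hS : S.PosDef) :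
    ∃ (L : Matrix n n ℝ) (D : n → ℝ),
      L.IsLowerTriangular ∧ (∀ i, 0 < D i) ∧ S = L * diagonal D * Lᵀ := by
  have hM : (LDL.lowerInv hS).IsLowerTriangular := fun i j hij => LDL.lowerInv_triangular hS hij
  refine ⟨LDL.lower hS, LDL.diagEntries hS, blockTriangular_inv_of_blockTriangular hM, ?_, ?_⟩
  · have : (LDL.diag hS).PosDef := by
      rw [LDL.diag_eq_lowerInv_conj]
      exact (IsUnit.posDef_star_right_conjugate_iff (isUnit_of_invertible _)).2 hS
    exact posDef_diagonal_iff.1 this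
  · simpa [LDL.diag, conjTranspose_eq_transpose_of_trivial] using (LDL.lower_conj_diag hS).symm

theorem Matrix.PosDef.isDiag_iff_det_eq_prod_diag (hS : S.PosDef) :
    S.IsDiag ↔ S.det = ∏ i, S i i := by
  refine ⟨IsDiag.det_eq_prod_diag, fun h => ?_⟩
  obtain ⟨L, D, hL, hD, rfl⟩ := hS.exists_eq_lower_mul_diagonal_mul_transpose
  exact isDiag_mul_diagonal_mul_transpose_of_det_eq_prod_diag (det_of_isLowerTriangular L hL) hD
    hS.det_pos.ne' h

end

theorem DE_eq_zero_iff {d : ℕ} {B : Matrix (Fin d) (Fin d) ℝ} (hB : B.PosDef) :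
    DE B = 0 ↔ B.det = ∏ i, B i i := by
  have hprod : 0 < ∏ i, B i i := prod_pos fun i _ => hB.diag_pos
  rw [DE, det_diagonal]
  constructor
  · intro h
    have := Real.eq_one_of_pos_of_log_eq_zero (div_pos hprod hB.det_pos) h
    exact ((div_eq_one_iff_eq hB.det_pos.ne').1 this).symm
  · intro h
    rw [← h, div_self hB.det_pos.ne', Real.log_one]

theorem diagonalization_error_zero_iff {d : ℕ}
    (A W : Matrix (Fin d) (Fin d) ℝ) (hA : A.PosDef) (hW : IsUnit W.det) :
    (Wᵀ * A * W).IsDiag ↔ DE (Wᵀ * A * W) = 0 := by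
  have hB : (Wᵀ * A * W).PosDef :=
    (IsUnit.posDef_star_left_conjugate_iff ((isUnit_iff_isUnit_det W).2 hW)).2 hA
  rw [DE_eq_zero_iff hB]
  exact hB.isDiag_iff_det_eq_prod_diag
end

section
/- Let M_{ij}(a,b) be smooth functions on an open set U ⊆ ℝ², indexed by i,j ≥ 0, satisfying ∂M_{ij}/∂a = M_{i+1,j} and ∂M_{ij}/∂b = M_{i,j+1}. Suppose M₀₀ M₁₁ = M₁₀ M₀₁ identically on U and M₀₀ > 0 on U. Then M₀₀ M_{ij} = M_{i0} M_{0j} on U for all i, j ≥ 0. -/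
open Filter Topology

section

variable {𝕜 : Type*} [NontriviallyNormedField 𝕜] {f v : 𝕜 → 𝕜}

/-- If `u = g * (v / f)` near `x` and `v / f` is stationary at `x`, then `u' = g' * (v / f)`
at `x`; stated without division. -/
theorem HasDerivAt.mul_eq_mul_of_eventually_mul_eq {u g : 𝕜 → 𝕜} {x f' u' g' v' : 𝕜}
    (hf : HasDerivAt f f' x) (hu : HasDerivAt u u' x) (hg : HasDerivAt g g' x)
    (hv : HasDerivAt v v' x) (hfx : f x ≠ 0)
    (hfv : f x * v' = f' * v x) (hfuv : ∀ᶠ y in 𝓝 x, f y * u y = g y * v y) :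
    f x * u' = g' * v x := by
  have hleibniz : f' * u x + f x * u' = g' * v x + g x * v' :=
    (hf.mul hu).unique ((hg.mul hv).congr_of_eventuallyEq hfuv)
  have hfuv_x : f x * u x = g x * v x := hfuv.self_of_nhds
  apply mul_left_cancel₀ hfx
  linear_combination f x * hleibniz - f' * hfuv_x + g x * hfv

theorem IsOpen.mul_eq_mul_of_hasDerivAt_succ {s : Set 𝕜} (hs : IsOpen s) {f' v' : 𝕜 → 𝕜}
    {u g : ℕ → 𝕜 → 𝕜} (hf : ∀ x ∈ s, HasDerivAt f (f' x) x)
    (hv : ∀ x ∈ s, HasDerivAt v (v' x) x)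
    (hu : ∀ n, ∀ x ∈ s, HasDerivAt (u n) (u (n + 1) x) x)
    (hg : ∀ n, ∀ x ∈ s, HasDerivAt (g n) (g (n + 1) x) x) (hf0 : ∀ x ∈ s, f x ≠ 0)
    (hfv : ∀ x ∈ s, f x * v' x = f' x * v x) (h0 : ∀ x ∈ s, f x * u 0 x = g 0 x * v x)
    (n : ℕ) :
    ∀ x ∈ s, f x * u n x = g n x * v x := by
  induction n with
  | zero => exact h0
  | succ n ih =>
    intro x hx
    exact (hf x hx).mul_eq_mul_of_eventually_mul_eq (hu n x hx) (hg n x hx) (hv x hx) (hf0 x hx)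
      (hfv x hx) (eventually_of_mem (hs.mem_nhds hx) ih)

end

theorem moment_factorization_induction (U : Set (ℝ × ℝ)) (hU : IsOpen U)
    (M : ℕ → ℕ → ℝ → ℝ → ℝ)
    (hda : ∀ (i j : ℕ), ∀ p ∈ U,
      HasDerivAt (fun a' => M i j a' p.2) (M (i + 1) j p.1 p.2) p.1)
    (hdb : ∀ (i j : ℕ), ∀ p ∈ U,
      HasDerivAt (fun b' => M i j p.1 b') (M i (j + 1) p.1 p.2) p.2)
    (hpos : ∀ p ∈ U, 0 < M 0 0 p.1 p.2)
    (hlin : ∀ p ∈ U,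
      M 0 0 p.1 p.2 * M 1 1 p.1 p.2 = M 1 0 p.1 p.2 * M 0 1 p.1 p.2) :
    ∀ (i j : ℕ), ∀ p ∈ U,
      M 0 0 p.1 p.2 * M i j p.1 p.2 = M i 0 p.1 p.2 * M 0 j p.1 p.2 := by
  -- first along horizontal lines with `j = 1`, where `M 0 1 / M 0 0` is stationary by `hlin`
  have hj_one : ∀ i, ∀ p ∈ U, M 0 0 p.1 p.2 * M i 1 p.1 p.2 = M i 0 p.1 p.2 * M 0 1 p.1 p.2 :=
    fun i p hp =>
      (hU.preimage (Continuous.prodMk_left p.2)).mul_eq_mul_of_hasDerivAt_succ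
        (u := fun n a => M n 1 a p.2) (g := fun n a => M n 0 a p.2)
        (fun a ha => hda 0 0 (a, p.2) ha) (fun a ha => hda 0 1 (a, p.2) ha)
        (fun n a ha => hda n 1 (a, p.2) ha) (fun n a ha => hda n 0 (a, p.2) ha)
        (fun a ha => (hpos (a, p.2) ha).ne') (fun a ha => hlin (a, p.2) ha)
        (fun _ _ => rfl) i p.1 hp
  -- then along vertical lines, where `M i 0 / M 0 0` is stationary by `hj_one`
  intro i j p hp
  have hvert := (hU.preimage (Continuous.prodMk_right p.1)).mul_eq_mul_of_hasDerivAt_succ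
    (u := fun n b => M i n p.1 b) (g := fun n b => M 0 n p.1 b)
    (fun b hb => hdb 0 0 (p.1, b) hb) (fun b hb => hdb i 0 (p.1, b) hb)
    (fun n b hb => hdb i n (p.1, b) hb) (fun n b hb => hdb 0 n (p.1, b) hb)
    (fun b hb => (hpos (p.1, b) hb).ne') (fun b hb => (hj_one i (p.1, b) hb).trans (mul_comm _ _))
    (fun _ _ => rfl) j p.2 hp
  exact hvert.trans (mul_comm _ _)
end
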